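/- Let μ be a probability measure on α × ℝ, where α is a measurable space, let τ ∈ (0,1), and let F(x, t) denote the conditional cumulative distribution function of the second coordinate given the first (Mathlib's condCDF). Suppose that for μ-first-marginal-almost every x, F(x, 0) = τ. Then for every bounded measurable function g : α → ℝ, ∫ [ρ_τ(y − g(x)) − ρ_τ(y)] dμ(x,y) = ∫_α [∫₀^{g(x)} (F(x, s) − τ) ds] dμ_1(x), where μ_1 is the first marginal of μ and the inner integral is oriented; in particular this quantity is nonnegative. -/

import Mathlib

/-!
By Knight's identity, `ρ_τ(y - a) - ρ_τ(y) = ∫₀^a (1{y ≤ s} - τ) ds` for every `y` and `a`.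
Disintegrating `μ` as `μ.fst ⊗ₘ (x ↦ law of F(x, ·))` and swapping the `y`- and `s`-integrals
turns `1{y ≤ s}` into `F(x, s)`. The inner integral is then `∫₀^{g x} (F(x, s) - F(x, 0)) ds`,
which is nonnegative in either orientation because `F(x, ·)` is monotone.
-/

open MeasureTheory ProbabilityTheory Set Filter Topology

noncomputable def checkLoss (τ u : ℝ) : ℝ := (τ - if u ≤ 0 then 1 else 0) * u

lemma checkLoss_eq_mul_sub_min (τ u : ℝ) : checkLoss τ u = τ * u - min u 0 := by
  rcases le_or_gt u 0 with hu | hu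
  · rw [checkLoss, if_pos hu, min_eq_left hu]; ring
  · rw [checkLoss, if_neg hu.not_ge, min_eq_right hu.le]; ring

@[fun_prop]
lemma continuous_checkLoss (τ : ℝ) : Continuous (checkLoss τ) := by
  simp_rw [funext (checkLoss_eq_mul_sub_min τ)]
  fun_prop

lemma abs_checkLoss_sub_sub_checkLoss_le (τ y a : ℝ) :
    |checkLoss τ (y - a) - checkLoss τ y| ≤ (|τ| + 1) * |a| := by
  have hmin : |min (y - a) 0 - min y 0| ≤ |a| := by
    simpa [abs_sub_comm] using abs_min_sub_min_le_max (y - a) 0 y 0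
  calc |checkLoss τ (y - a) - checkLoss τ y|
      = |-(τ * a) - (min (y - a) 0 - min y 0)| := by
        rw [checkLoss_eq_mul_sub_min, checkLoss_eq_mul_sub_min]; congr 1; ring
    _ ≤ |τ| * |a| + |a| := by
        refine (abs_sub _ _).trans (add_le_add ?_ hmin)
        rw [abs_neg, abs_mul]
    _ = (|τ| + 1) * |a| := by ring

lemma hasDerivAt_checkLoss_sub {τ y s : ℝ} (hs : s ≠ y) :
    HasDerivAt (fun t ↦ checkLoss τ (y - t)) ((Iic s).indicator (1 : ℝ → ℝ) y - τ) s := by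
  have hside : ∀ᶠ t in 𝓝 s, (y ≤ t ↔ y ≤ s) := by
    rcases hs.lt_or_gt with h | h
    · filter_upwards [eventually_lt_nhds h] with t ht
      exact iff_of_false ht.not_ge h.not_ge
    · filter_upwards [eventually_gt_nhds h] with t ht
      exact iff_of_true ht.le h.le
  have hlin : ∀ᶠ t in 𝓝 s, checkLoss τ (y - t) = (τ - (Iic s).indicator 1 y) * (y - t) := by
    filter_upwards [hside] with t ht
    simp only [checkLoss, sub_nonpos, ht, indicator, mem_Iic, Pi.one_apply]
  exact (((hasDerivAt_id' s).const_sub y).const_mul _ |>.congr_of_eventuallyEq hlin).congr_deriv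
    (by ring)

lemma monotone_indicator_Iic_one (y : ℝ) :
    Monotone fun s : ℝ ↦ (Iic s).indicator (1 : ℝ → ℝ) y :=
  fun _ _ hst ↦ indicator_le_indicator_of_subset (Iic_subset_Iic.2 hst) (fun _ ↦ zero_le_one) y

-- Knight's identity
lemma checkLoss_sub_sub_checkLoss (τ y a : ℝ) :
    checkLoss τ (y - a) - checkLoss τ y =
      ∫ s in (0 : ℝ)..a, ((Iic s).indicator (1 : ℝ → ℝ) y - τ) := by
  rw [integral_eq_of_hasDerivAt_off_countable _ _ (countable_singleton y)
    ((continuous_checkLoss τ).comp (continuous_sub_left y)).continuousOn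
    (fun s hs ↦ hasDerivAt_checkLoss_sub hs.2)
    ((monotone_indicator_Iic_one y).intervalIntegrable.sub intervalIntegrable_const)]
  simp

lemma Monotone.intervalIntegral_sub_nonneg {f : ℝ → ℝ} (hf : Monotone f) (a b : ℝ) :
    0 ≤ ∫ s in a..b, (f s - f a) := by
  rcases le_total a b with hab | hba
  · exact intervalIntegral.integral_nonneg hab fun s hs ↦ sub_nonneg.2 (hf hs.1)
  · rw [intervalIntegral.integral_symm, ← intervalIntegral.integral_neg]
    exact intervalIntegral.integral_nonneg hba fun s hs ↦ by simpa using hf hs.2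

lemma integral_checkLoss_sub_sub_checkLoss (ν : Measure ℝ) [IsProbabilityMeasure ν] (τ a : ℝ) :
    ∫ y, (checkLoss τ (y - a) - checkLoss τ y) ∂ν = ∫ s in (0 : ℝ)..a, (ν.real (Iic s) - τ) := by
  have hint : Integrable (Function.uncurry fun s y ↦ (Iic s).indicator (1 : ℝ → ℝ) y - τ)
      ((volume.restrict (uIoc 0 a)).prod ν) :=
    have : IsFiniteMeasure (volume.restrict (uIoc 0 a)) := Real.isFiniteMeasure_restrict_Ioc _ _
    ((integrable_const (1 : ℝ)).indicator (measurableSet_le measurable_snd measurable_fst)).sub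
      (integrable_const τ)
  simp_rw [checkLoss_sub_sub_checkLoss, ← intervalIntegral_integral_swap hint]
  refine intervalIntegral.integral_congr fun s _ ↦ ?_
  have hind : Integrable ((Iic s).indicator (1 : ℝ → ℝ)) ν :=
    (integrable_const 1).indicator measurableSet_Iic
  rw [integral_sub hind (integrable_const τ),
    integral_indicator_one measurableSet_Iic, integral_const, probReal_univ, one_smul]

namespace ProbabilityTheory

variable {α : Type*} [MeasurableSpace α]

noncomputable def condCDFKernel (μ : Measure (α × ℝ)) : Kernel α ℝ :=
  ⟨fun x ↦ (condCDF μ x).measure, measurable_measure_condCDF μ⟩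

instance (μ : Measure (α × ℝ)) : IsMarkovKernel (condCDFKernel μ) :=
  ⟨fun x ↦ instIsProbabilityMeasureCondCDF μ x⟩

lemma fst_compProd_condCDFKernel (μ : Measure (α × ℝ)) [IsFiniteMeasure μ] :
    μ.fst ⊗ₘ condCDFKernel μ = μ := by
  ext s hs
  rw [Measure.compProd_apply hs]
  exact lintegral_toKernel_mem (isCondKernelCDF_condCDF μ) () hs

lemma integral_eq_integral_condCDF_measure (μ : Measure (α × ℝ)) [IsFiniteMeasure μ]
    {E : Type*} [NormedAddCommGroup E] [NormedSpace ℝ E] {f : α × ℝ → E} (hf : Integrable f μ) :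
    ∫ p, f p ∂μ = ∫ x, ∫ y, f (x, y) ∂(condCDF μ x).measure ∂μ.fst := by
  conv_lhs => rw [← fst_compProd_condCDFKernel μ]
  exact Measure.integral_compProd (by rwa [fst_compProd_condCDFKernel])

lemma measureReal_condCDF_Iic (μ : Measure (α × ℝ)) (x : α) (s : ℝ) :
    (condCDF μ x).measure.real (Iic s) = condCDF μ x s := by
  rw [measureReal_def, measure_condCDF_Iic, ENNReal.toReal_ofReal (condCDF_nonneg μ x s)]

end ProbabilityTheory

theorem efpe_representation_condCDF_general
    {α : Type*} [MeasurableSpace α] (μ : Measure (α × ℝ)) [IsProbabilityMeasure μ]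
    (τ : ℝ)
    (hq : ∀ᵐ x ∂μ.fst, condCDF μ x 0 = τ)
    (g : α → ℝ) (hg : Measurable g) (M : ℝ) (hM : ∀ x, |g x| ≤ M) :
    (∫ p : α × ℝ, ((τ - if p.2 - g p.1 ≤ 0 then 1 else 0) * (p.2 - g p.1)
          - (τ - if p.2 ≤ 0 then 1 else 0) * p.2) ∂μ
        = ∫ x, (∫ s in (0 : ℝ)..(g x), (condCDF μ x s - τ)) ∂μ.fst)
    ∧ 0 ≤ ∫ x, (∫ s in (0 : ℝ)..(g x), (condCDF μ x s - τ)) ∂μ.fst := by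
  refine ⟨?_, integral_nonneg_of_ae ?_⟩
  · have hint : Integrable (fun p : α × ℝ ↦ checkLoss τ (p.2 - g p.1) - checkLoss τ p.2) μ := by
      refine .of_bound (Measurable.aestronglyMeasurable ?_) ((|τ| + 1) * M) (ae_of_all _ fun p ↦ ?_)
      · fun_prop
      · exact (abs_checkLoss_sub_sub_checkLoss_le τ p.2 (g p.1)).trans
          (mul_le_mul_of_nonneg_left (hM p.1) (by positivity))
    calc _ = ∫ p, (checkLoss τ (p.2 - g p.1) - checkLoss τ p.2) ∂μ := rfl
      _ = _ := integral_eq_integral_condCDF_measure μ hint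
      _ = _ := by simp_rw [integral_checkLoss_sub_sub_checkLoss, measureReal_condCDF_Iic]
  · filter_upwards [hq] with x hx
    rw [← hx]
    exact (condCDF μ x).mono.intervalIntegral_sub_nonneg 0 (g x)

/-- Excess final prediction error representation via the conditional cdf: if the
conditional cdf `F(x,·) = condCDF μ x` satisfies `F(x,0) = τ` for almost every `x`
(w.r.t. the first marginal), then for every bounded measurable `g`,
`∫ [ρ_τ(y − g(x)) − ρ_τ(y)] dμ(x,y) = ∫ ∫₀^{g(x)} (F(x,s) − τ) ds dμ₁(x) ≥ 0`. -/
theorem efpe_representation_condCDF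
    {α : Type*} [MeasurableSpace α] (μ : Measure (α × ℝ)) [IsProbabilityMeasure μ]
    (τ : ℝ) (hτ : τ ∈ Set.Ioo (0 : ℝ) 1)
    (hq : ∀ᵐ x ∂μ.fst, condCDF μ x 0 = τ)
    (g : α → ℝ) (hg : Measurable g) (M : ℝ) (hM : ∀ x, |g x| ≤ M) :
    (∫ p : α × ℝ, ((τ - if p.2 - g p.1 ≤ 0 then 1 else 0) * (p.2 - g p.1)
          - (τ - if p.2 ≤ 0 then 1 else 0) * p.2) ∂μ
        = ∫ x, (∫ s in (0 : ℝ)..(g x), (condCDF μ x s - τ)) ∂μ.fst)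
    ∧ 0 ≤ ∫ x, (∫ s in (0 : ℝ)..(g x), (condCDF μ x s - τ)) ∂μ.fst :=
  efpe_representation_condCDF_general μ τ hq g hg M hM
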